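/- Dissipativity of the Koopman–von Neumann operator: let ψ : Ω → ℂ be square-integrable such that both Re ψ and Im ψ lie in the zero-trace PFS class, with weak divergences g_r = div((Re ψ)F) and g_i = div((Im ψ)F) in L²(Ω). Setting Kψ := −(g_r + i g_i) + ½(div F)ψ, one has Re (Kψ, ψ)_{L²(Ω;ℂ)} = 0, where (u, v)_{L²(Ω;ℂ)} := ∫_Ω conj(u) v dx. In particular K is dissipative. -/

import Mathlib

open MeasureTheory Filter

/-- The divergence of a vector field `F : ℝ^d → ℝ^d`, defined via partial derivatives. -/
noncomputable def divF {d : ℕ} (F : EuclideanSpace ℝ (Fin d) → EuclideanSpace ℝ (Fin d))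
    (x : EuclideanSpace ℝ (Fin d)) : ℝ :=
  ∑ j, fderiv ℝ F x (EuclideanSpace.single j 1) j

/-- `g ∈ L²` is the weak divergence of `ψ F` on `Ω`:
`∫_Ω ψ F·∇φ = -∫_Ω g φ` for all test functions `φ ∈ C_c^∞(Ω)`. -/
def IsWeakDiv {d : ℕ} (Ω : Set (EuclideanSpace ℝ (Fin d)))
    (F : EuclideanSpace ℝ (Fin d) → EuclideanSpace ℝ (Fin d))
    (ψ g : EuclideanSpace ℝ (Fin d) → ℝ) : Prop :=
  ∀ φ : EuclideanSpace ℝ (Fin d) → ℝ, ContDiff ℝ (⊤ : ℕ∞) φ → HasCompactSupport φ →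
    tsupport φ ⊆ Ω →
    ∫ x in Ω, ψ x * ∑ j, F x j * fderiv ℝ φ x (EuclideanSpace.single j 1) =
      - ∫ x in Ω, g x * φ x

/-- `ψ` lies in the zero-trace PFS class with weak divergence `g = div(ψF)`:
there is a sequence `ψ_n ∈ C_c^∞(Ω)` with `ψ_n → ψ` in `L²(Ω)` and
`F·∇ψ_n + (div F) ψ_n → g` in `L²(Ω)`. -/
def InZeroTracePFS {d : ℕ} (Ω : Set (EuclideanSpace ℝ (Fin d)))
    (F : EuclideanSpace ℝ (Fin d) → EuclideanSpace ℝ (Fin d))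
    (ψ g : EuclideanSpace ℝ (Fin d) → ℝ) : Prop :=
  IsWeakDiv Ω F ψ g ∧
  ∃ ψn : ℕ → EuclideanSpace ℝ (Fin d) → ℝ,
    (∀ n, ContDiff ℝ (⊤ : ℕ∞) (ψn n) ∧ HasCompactSupport (ψn n) ∧ tsupport (ψn n) ⊆ Ω) ∧
    Tendsto (fun n => ∫ x in Ω, (ψn n x - ψ x) ^ 2) atTop (nhds 0) ∧
    Tendsto (fun n => ∫ x in Ω,
        ((∑ j, F x j * fderiv ℝ (ψn n) x (EuclideanSpace.single j 1)) +
          divF F x * ψn n x - g x) ^ 2) atTop (nhds 0)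

lemma integrable_mul_of_memL2 {α : Type*} [MeasurableSpace α] {μ : Measure α}
    {a b : α → ℝ} (ha : MemLp a 2 μ) (hb : MemLp b 2 μ) :
    Integrable (fun x => a x * b x) μ := by
  have h := L2.integrable_inner (𝕜 := ℝ) (ha.toLp a) (hb.toLp b)
  refine h.congr ?_
  filter_upwards [ha.coeFn_toLp, hb.coeFn_toLp] with x hx hy
  simp [hx, hy, RCLike.inner_apply, starRingEnd_apply]
  ring

lemma tendsto_integral_mul_of_L2 {α : Type*} [MeasurableSpace α] {μ : Measure α}
    {a b : α → ℝ} {bn : ℕ → α → ℝ}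
    (ha : MemLp a 2 μ) (hbn : ∀ n, MemLp (bn n) 2 μ) (hb : MemLp b 2 μ)
    (h : Tendsto (fun n => ∫ x, (bn n x - b x) ^ 2 ∂μ) atTop (nhds 0)) :
    Tendsto (fun n => ∫ x, a x * bn n x ∂μ) atTop (nhds (∫ x, a x * b x ∂μ)) := by
  set A := ha.toLp a with hA
  set B := hb.toLp b with hB
  set Bn : ℕ → Lp ℝ 2 μ := fun n => (hbn n).toLp (bn n) with hBn
  have key : ∀ (c : α → ℝ) (hc : MemLp c 2 μ),
      (inner ℝ A (hc.toLp c) : ℝ) = ∫ x, a x * c x ∂μ := by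
    intro c hc
    rw [L2.inner_def]
    refine integral_congr_ae ?_
    filter_upwards [ha.coeFn_toLp, hc.coeFn_toLp] with x h1 h2
    simp [RCLike.inner_apply, hA, h1, h2, starRingEnd_apply]
    ring
  have hnormsq : ∀ n, ‖Bn n - B‖ ^ 2 = ∫ x, (bn n x - b x) ^ 2 ∂μ := by
    intro n
    rw [← real_inner_self_eq_norm_sq, L2.inner_def]
    refine integral_congr_ae ?_
    filter_upwards [Lp.coeFn_sub (Bn n) B, (hbn n).coeFn_toLp, hb.coeFn_toLp] with x h1 h2 h3
    have hx : (Bn n - B : Lp ℝ 2 μ) x = bn n x - b x := by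
      rw [h1, Pi.sub_apply, h2, h3]
    rw [hx]
    simp [RCLike.inner_apply, starRingEnd_apply, sq]
  have hBnB : Tendsto Bn atTop (nhds B) := by
    rw [tendsto_iff_norm_sub_tendsto_zero]
    have h2 : Tendsto (fun n => ‖Bn n - B‖ ^ 2) atTop (nhds 0) := by
      simpa only [hnormsq] using h
    have h3 : Tendsto (fun n => Real.sqrt (‖Bn n - B‖ ^ 2)) atTop (nhds (Real.sqrt 0)) :=
      (Real.continuous_sqrt.tendsto 0).comp h2
    simpa [Real.sqrt_sq (norm_nonneg _)] using h3
  have hinner : Tendsto (fun n => (inner ℝ A (Bn n) : ℝ)) atTop (nhds (inner ℝ A B : ℝ)) :=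
    tendsto_const_nhds.inner hBnB
  have final : Tendsto (fun n => ∫ x, a x * bn n x ∂μ) atTop (nhds (inner ℝ A B : ℝ)) :=
    Tendsto.congr (fun n => key (bn n) (hbn n)) hinner
  rwa [key b hb] at final

lemma key_identity {d : ℕ} {Ω : Set (EuclideanSpace ℝ (Fin d))}
    (hΩo : IsOpen Ω) (hΩb : Bornology.IsBounded Ω)
    {F : EuclideanSpace ℝ (Fin d) → EuclideanSpace ℝ (Fin d)}
    {U : Set (EuclideanSpace ℝ (Fin d))}
    (hUo : IsOpen U) (hUΩ : closure Ω ⊆ U) (hFC1 : ContDiffOn ℝ 1 F U)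
    {u g : EuclideanSpace ℝ (Fin d) → ℝ}
    (hu : MemLp u 2 (volume.restrict Ω)) (hg : MemLp g 2 (volume.restrict Ω))
    (h : InZeroTracePFS Ω F u g) :
    ∫ x in Ω, g x * u x = (1 / 2) * ∫ x in Ω, divF F x * u x ^ 2 := by
  haveI : IsFiniteMeasure (volume.restrict Ω) :=
    ⟨by rw [Measure.restrict_apply_univ]; exact hΩb.measure_lt_top⟩
  have hΩU : Ω ⊆ U := subset_closure.trans hUΩ
  have hK : IsCompact (closure Ω) := Metric.isCompact_of_isClosed_isBounded
    isClosed_closure hΩb.closure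
  -- continuity facts
  have hfd : ContinuousOn (fderiv ℝ F) U := hFC1.continuousOn_fderiv_of_isOpen hUo le_rfl
  have hdiv : ContinuousOn (divF F) U := by
    refine continuousOn_finset_sum _ (fun j _ => ?_)
    exact (EuclideanSpace.proj j).continuous.comp_continuousOn
      (hfd.clm_apply continuousOn_const)
  -- MemLp from a continuous-on-U function
  have aesm : ∀ {f : EuclideanSpace ℝ (Fin d) → ℝ}, ContinuousOn f U →
      AEStronglyMeasurable f (volume.restrict Ω) := by
    intro f hf
    exact (hf.aestronglyMeasurable hUo.measurableSet).mono_measure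
      (Measure.restrict_mono hΩU le_rfl)
  have memL2 : ∀ {f : EuclideanSpace ℝ (Fin d) → ℝ}, ContinuousOn f U →
      MemLp f 2 (volume.restrict Ω) := by
    intro f hf
    obtain ⟨C, hC⟩ := hK.exists_bound_of_continuousOn (hf.mono hUΩ)
    refine MemLp.of_bound (aesm hf) C ?_
    filter_upwards [ae_restrict_mem hΩo.measurableSet] with x hx
    exact hC x (subset_closure hx)
  obtain ⟨hwd, ψn, hreg, hconv1, hconv2⟩ := h
  -- regularity of the approximating sequence
  have hψnc : ∀ n, Continuous (ψn n) := fun n => (hreg n).1.continuous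
  have hψnC : ∀ n, ContinuousOn (ψn n) U := fun n => (hψnc n).continuousOn
  have hSnC : ∀ n, ContinuousOn
      (fun x => ∑ j, F x j * fderiv ℝ (ψn n) x (EuclideanSpace.single j 1)) U := by
    intro n
    refine continuousOn_finset_sum _ (fun j _ => ContinuousOn.mul ?_ ?_)
    · exact (EuclideanSpace.proj j).continuous.comp_continuousOn hFC1.continuousOn
    · exact (((hreg n).1.continuous_fderiv (by simp)).clm_apply continuous_const).continuousOn
  have mψn : ∀ n, MemLp (ψn n) 2 (volume.restrict Ω) := fun n => memL2 (hψnC n)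
  have mSn : ∀ n, MemLp
      (fun x => ∑ j, F x j * fderiv ℝ (ψn n) x (EuclideanSpace.single j 1)) 2
      (volume.restrict Ω) := fun n => memL2 (hSnC n)
  have mhn : ∀ n, MemLp
      (fun x => (∑ j, F x j * fderiv ℝ (ψn n) x (EuclideanSpace.single j 1)) +
        divF F x * ψn n x) 2 (volume.restrict Ω) :=
    fun n => memL2 ((hSnC n).add (hdiv.mul (hψnC n)))
  -- divF * u is in L²
  obtain ⟨C, hC⟩ := hK.exists_bound_of_continuousOn (hdiv.mono hUΩ)
  have mdu : MemLp (fun x => divF F x * u x) 2 (volume.restrict Ω) := by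
    refine MemLp.of_le_mul (c := C) hu ((aesm hdiv).mul hu.1) ?_
    filter_upwards [ae_restrict_mem hΩo.measurableSet] with x hx
    rw [norm_mul]
    exact mul_le_mul_of_nonneg_right (hC x (subset_closure hx)) (norm_nonneg _)
  -- the basic identity from the weak divergence, tested with ψn
  have step : ∀ n, ∫ x in Ω, g x * ψn n x =
      - (∫ x in Ω, u x * ((∑ j, F x j * fderiv ℝ (ψn n) x (EuclideanSpace.single j 1)) +
          divF F x * ψn n x))
        + ∫ x in Ω, (divF F x * u x) * ψn n x := by
    intro n
    have hw := hwd (ψn n) (hreg n).1 (hreg n).2.1 (hreg n).2.2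
    have hsplit : ∫ x in Ω, u x * ((∑ j, F x j * fderiv ℝ (ψn n) x
          (EuclideanSpace.single j 1)) + divF F x * ψn n x) =
        (∫ x in Ω, u x * ∑ j, F x j * fderiv ℝ (ψn n) x (EuclideanSpace.single j 1))
          + ∫ x in Ω, u x * (divF F x * ψn n x) := by
      rw [← integral_add (integrable_mul_of_memL2 hu (mSn n))
        (integrable_mul_of_memL2 hu (memL2 (f := fun x => divF F x * ψn n x) (hdiv.mul (hψnC n))))]
      exact integral_congr_ae (Eventually.of_forall (fun x => by ring))
    have hrw2 : ∫ x in Ω, u x * (divF F x * ψn n x) =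
        ∫ x in Ω, (divF F x * u x) * ψn n x :=
      integral_congr_ae (Eventually.of_forall (fun x => by ring))
    rw [hsplit, hw, hrw2]; ring
  -- limits
  have lim1 : Tendsto (fun n => ∫ x in Ω, g x * ψn n x) atTop
      (nhds (∫ x in Ω, g x * u x)) :=
    tendsto_integral_mul_of_L2 hg mψn hu hconv1
  have lim2 : Tendsto (fun n => ∫ x in Ω, u x *
      ((∑ j, F x j * fderiv ℝ (ψn n) x (EuclideanSpace.single j 1)) + divF F x * ψn n x))
      atTop (nhds (∫ x in Ω, u x * g x)) :=
    tendsto_integral_mul_of_L2 hu mhn hg hconv2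
  have lim3 : Tendsto (fun n => ∫ x in Ω, (divF F x * u x) * ψn n x) atTop
      (nhds (∫ x in Ω, (divF F x * u x) * u x)) :=
    tendsto_integral_mul_of_L2 mdu mψn hu hconv1
  have lim4 : Tendsto (fun n => ∫ x in Ω, g x * ψn n x) atTop
      (nhds (- (∫ x in Ω, u x * g x) + ∫ x in Ω, (divF F x * u x) * u x)) := by
    have := (lim2.neg).add lim3
    exact Tendsto.congr (fun n => (step n).symm) this
  have huniq : ∫ x in Ω, g x * u x =
      - (∫ x in Ω, u x * g x) + ∫ x in Ω, (divF F x * u x) * u x :=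
    tendsto_nhds_unique lim1 lim4
  have hgu : ∫ x in Ω, u x * g x = ∫ x in Ω, g x * u x :=
    integral_congr_ae (Eventually.of_forall (fun x => by ring))
  have hdu2 : ∫ x in Ω, (divF F x * u x) * u x = ∫ x in Ω, divF F x * u x ^ 2 :=
    integral_congr_ae (Eventually.of_forall (fun x => by ring))
  rw [hgu, hdu2] at huniq
  linarith

lemma integrable_conj_mul {α : Type*} [MeasurableSpace α] {μ : Measure α} {φ χ : α → ℂ}
    (hφ : MemLp φ 2 μ) (hχ : MemLp χ 2 μ) :
    Integrable (fun x => (starRingEnd ℂ) (φ x) * χ x) μ := by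
  refine (integrable_mul_of_memL2 hφ.norm hχ.norm).mono' ?_ ?_
  · exact (RCLike.continuous_conj.comp_aestronglyMeasurable hφ.1).mul hχ.1
  · filter_upwards with x
    simp [norm_mul]

lemma memL2_ofReal {α : Type*} [MeasurableSpace α] {μ : Measure α} {f : α → ℝ}
    (hf : MemLp f 2 μ) : MemLp (fun x => (f x : ℂ)) 2 μ := by
  refine MemLp.of_le_mul (c := 1) hf
    (Complex.continuous_ofReal.comp_aestronglyMeasurable hf.1) ?_
  filter_upwards with x
  simp


/-- Dissipativity of the Koopman–von Neumann operator: for square-integrable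
`ψ : Ω → ℂ` whose real and imaginary parts lie in the zero-trace PFS class, with weak
divergences `g_r, g_i`, and `Kψ := −(g_r + i g_i) + ½(div F)ψ`, one has
`Re (Kψ, ψ)_{L²(Ω;ℂ)} = 0`; in particular `K` is dissipative. -/
theorem kvn_dissipative
    (d : ℕ) (hd : 1 ≤ d)
    (Ω : Set (EuclideanSpace ℝ (Fin d)))
    (hΩo : IsOpen Ω) (hΩb : Bornology.IsBounded Ω) (hΩne : Ω.Nonempty)
    (F : EuclideanSpace ℝ (Fin d) → EuclideanSpace ℝ (Fin d))
    (U : Set (EuclideanSpace ℝ (Fin d)))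
    (hUo : IsOpen U) (hUΩ : closure Ω ⊆ U) (hFC1 : ContDiffOn ℝ 1 F U)
    (ψ : EuclideanSpace ℝ (Fin d) → ℂ)
    (hψ : MemLp ψ 2 (volume.restrict Ω))
    (gr gi : EuclideanSpace ℝ (Fin d) → ℝ)
    (hgr : MemLp gr 2 (volume.restrict Ω)) (hgi : MemLp gi 2 (volume.restrict Ω))
    (hztr : InZeroTracePFS Ω F (fun x => (ψ x).re) gr)
    (hzti : InZeroTracePFS Ω F (fun x => (ψ x).im) gi) :
    (∫ x in Ω, (starRingEnd ℂ)
        (-(gr x + Complex.I * gi x) + (1 / 2) * (divF F x : ℂ) * ψ x) * ψ x).re = 0 := by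
  haveI : IsFiniteMeasure (volume.restrict Ω) :=
    ⟨by rw [Measure.restrict_apply_univ]; exact hΩb.measure_lt_top⟩
  have hΩU : Ω ⊆ U := subset_closure.trans hUΩ
  have hK : IsCompact (closure Ω) := Metric.isCompact_of_isClosed_isBounded
    isClosed_closure hΩb.closure
  have hfd : ContinuousOn (fderiv ℝ F) U := hFC1.continuousOn_fderiv_of_isOpen hUo le_rfl
  have hdiv : ContinuousOn (divF F) U := by
    refine continuousOn_finset_sum _ (fun j _ => ?_)
    exact (EuclideanSpace.proj j).continuous.comp_continuousOn
      (hfd.clm_apply continuousOn_const)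
  have aesmdiv : AEStronglyMeasurable (divF F) (volume.restrict Ω) :=
    (hdiv.aestronglyMeasurable hUo.measurableSet).mono_measure
      (Measure.restrict_mono hΩU le_rfl)
  obtain ⟨C, hC⟩ := hK.exists_bound_of_continuousOn (hdiv.mono hUΩ)
  -- real and imaginary parts are in L²
  have hur : MemLp (fun x => (ψ x).re) 2 (volume.restrict Ω) := hψ.re
  have hui : MemLp (fun x => (ψ x).im) 2 (volume.restrict Ω) := hψ.im
  -- the key identities
  have keyr := key_identity hΩo hΩb hUo hUΩ hFC1 hur hgr hztr
  have keyi := key_identity hΩo hΩb hUo hUΩ hFC1 hui hgi hzti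
  -- MemLp of divF * (re/im parts)
  have mdu : ∀ {u : EuclideanSpace ℝ (Fin d) → ℝ}, MemLp u 2 (volume.restrict Ω) →
      MemLp (fun x => divF F x * u x) 2 (volume.restrict Ω) := by
    intro u hu
    refine MemLp.of_le_mul (c := C) hu (aesmdiv.mul hu.1) ?_
    filter_upwards [ae_restrict_mem hΩo.measurableSet] with x hx
    rw [norm_mul]
    exact mul_le_mul_of_nonneg_right (hC x (subset_closure hx)) (norm_nonneg _)
  -- MemLp of Kψ
  have mK : MemLp (fun x => -((gr x : ℂ) + Complex.I * (gi x : ℂ))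
      + (1 / 2) * (divF F x : ℂ) * ψ x) 2 (volume.restrict Ω) := by
    refine MemLp.add (MemLp.neg (MemLp.add (memL2_ofReal hgr)
      ((memL2_ofReal hgi).const_mul Complex.I))) ?_
    refine MemLp.of_le_mul (c := |C| / 2 + 1) hψ ?_ ?_
    · exact ((Complex.continuous_ofReal.comp_aestronglyMeasurable aesmdiv).const_mul
        ((1 : ℂ) / 2)).mul hψ.1
    · filter_upwards [ae_restrict_mem hΩo.measurableSet] with x hx
      have h1 : ‖(1 / 2 : ℂ) * (divF F x : ℂ) * ψ x‖ = (1 / 2) * |divF F x| * ‖ψ x‖ := by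
        simp [norm_mul, abs_of_nonneg]
      rw [h1]
      have h2 : |divF F x| ≤ |C| := le_trans (hC x (subset_closure hx)) (le_abs_self C)
      have h3 : (0 : ℝ) ≤ ‖ψ x‖ := norm_nonneg _
      nlinarith [abs_nonneg (divF F x)]
  -- integrability of the full integrand
  have hint : Integrable (fun x => (starRingEnd ℂ)
      (-((gr x : ℂ) + Complex.I * (gi x : ℂ)) + (1 / 2) * (divF F x : ℂ) * ψ x) * ψ x)
      (volume.restrict Ω) := integrable_conj_mul mK hψ
  -- push re inside the integral
  have hre : (∫ x in Ω, (starRingEnd ℂ)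
      (-((gr x : ℂ) + Complex.I * (gi x : ℂ)) + (1 / 2) * (divF F x : ℂ) * ψ x) * ψ x).re
      = ∫ x in Ω, ((starRingEnd ℂ)
      (-((gr x : ℂ) + Complex.I * (gi x : ℂ)) + (1 / 2) * (divF F x : ℂ) * ψ x) * ψ x).re := by
    have h := integral_re (𝕜 := ℂ) hint
    simp only [RCLike.re_to_complex] at h
    exact h.symm
  rw [hre]
  -- pointwise computation of the real part
  have hpt : ∀ x, ((starRingEnd ℂ)
      (-((gr x : ℂ) + Complex.I * (gi x : ℂ)) + (1 / 2) * (divF F x : ℂ) * ψ x) * ψ x).re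
      = (-(gr x * (ψ x).re) + -(gi x * (ψ x).im))
        + ((1 / 2) * (divF F x * (ψ x).re ^ 2) + (1 / 2) * (divF F x * (ψ x).im ^ 2)) := by
    intro x
    simp only [map_add, map_neg, map_mul, Complex.conj_ofReal, Complex.conj_I, map_div₀,
      map_one, map_ofNat]
    simp [Complex.mul_re, Complex.add_re, Complex.add_im, Complex.mul_im, Complex.neg_re,
      Complex.neg_im, Complex.ofReal_re, Complex.ofReal_im, Complex.I_re, Complex.I_im,
      Complex.div_re, Complex.div_im, Complex.normSq]
    ring
  rw [integral_congr_ae (Eventually.of_forall hpt)]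
  -- integrabilities for splitting
  have I1 : Integrable (fun x => gr x * (ψ x).re) (volume.restrict Ω) :=
    integrable_mul_of_memL2 hgr hur
  have I2 : Integrable (fun x => gi x * (ψ x).im) (volume.restrict Ω) :=
    integrable_mul_of_memL2 hgi hui
  have I3 : Integrable (fun x => divF F x * (ψ x).re ^ 2) (volume.restrict Ω) := by
    refine (integrable_mul_of_memL2 (mdu hur) hur).congr ?_
    filter_upwards with x
    ring
  have I4 : Integrable (fun x => divF F x * (ψ x).im ^ 2) (volume.restrict Ω) := by
    refine (integrable_mul_of_memL2 (mdu hui) hui).congr ?_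
    filter_upwards with x
    ring
  have J1 : Integrable (fun a => -(gr a * (ψ a).re) + -(gi a * (ψ a).im))
      (volume.restrict Ω) := I1.neg.add I2.neg
  have J2 : Integrable (fun a => (1 / 2 : ℝ) * (divF F a * (ψ a).re ^ 2)
      + (1 / 2 : ℝ) * (divF F a * (ψ a).im ^ 2)) (volume.restrict Ω) :=
    (I3.const_mul _).add (I4.const_mul _)
  have J3 : Integrable (fun a => -(gr a * (ψ a).re)) (volume.restrict Ω) := I1.neg
  have J4 : Integrable (fun a => -(gi a * (ψ a).im)) (volume.restrict Ω) := I2.neg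
  have J5 : Integrable (fun a => (1 / 2 : ℝ) * (divF F a * (ψ a).re ^ 2))
      (volume.restrict Ω) := I3.const_mul _
  have J6 : Integrable (fun a => (1 / 2 : ℝ) * (divF F a * (ψ a).im ^ 2))
      (volume.restrict Ω) := I4.const_mul _
  rw [integral_add J1 J2, integral_add J3 J4, integral_add J5 J6,
    integral_neg, integral_neg, integral_const_mul, integral_const_mul]
  linarith [keyr, keyi]
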